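/- Let I : ℂ[x] → ℂ[x] denote the antiderivative of polynomials with zero constant term (the unique polynomial with derivative a and constant coefficient 0). Define a⋆b = b·I(I(a)) and a⋄b = b·I(I(a)) + I(a)·I(b). Then (ℂ[x], ⋄) is a Zinbiel algebra, i.e., a⋄(b⋄c) = (a⋄b + b⋄a)⋄c for all polynomials a, b, c, and a⋆b − b⋆a = a⋄b − b⋄a for all a, b; consequently the Tortkara algebra (ℂ[x], [·,·]_⋆) with [a,b]_⋆ = a⋆b − b⋆a is special, being a subalgebra of (ℂ[x], ⋄)^(−). -/

import Mathlib

/-- A bundled Zinbiel algebra over `K`: a nonunital nonassociative `K`-algebra whose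
product satisfies the Zinbiel identity `a∘(b∘c) = (a∘b + b∘a)∘c`. -/
structure ZinbielAlgebra (K : Type) [Field K] : Type 1 where
  carrier : Type
  [ring : NonUnitalNonAssocRing carrier]
  [mod : Module K carrier]
  [smulComm : SMulCommClass K carrier carrier]
  [tower : IsScalarTower K carrier carrier]
  zinbiel : ∀ a b c : carrier, a * (b * c) = (a * b + b * a) * c

attribute [instance] ZinbielAlgebra.ring ZinbielAlgebra.mod
  ZinbielAlgebra.smulComm ZinbielAlgebra.tower

/-- A bundled Tortkara algebra over `K`: an anticommutative nonunital nonassociative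
`K`-algebra satisfying `(ab)(cb) = J(a,b,c)b`, where `J(a,b,c) = (ab)c+(bc)a+(ca)b`. -/
structure TortkaraAlgebra (K : Type) [Field K] : Type 1 where
  carrier : Type
  [ring : NonUnitalNonAssocRing carrier]
  [mod : Module K carrier]
  [smulComm : SMulCommClass K carrier carrier]
  [tower : IsScalarTower K carrier carrier]
  anticomm : ∀ a b : carrier, a * b = -(b * a)
  tortkara : ∀ a b c : carrier,
    (a * b) * (c * b) = ((a * b) * c + (b * c) * a + (c * a) * b) * b

attribute [instance] TortkaraAlgebra.ring TortkaraAlgebra.mod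
  TortkaraAlgebra.smulComm TortkaraAlgebra.tower

open Polynomial in
/-- The antiderivative with zero constant term of a polynomial. -/
noncomputable def pint (p : Polynomial ℂ) : Polynomial ℂ :=
  p.sum fun n a => Polynomial.C (a / (n + 1)) * Polynomial.X ^ (n + 1)

/-- `a ⋆ b = b · I(I(a))`. -/
noncomputable def starMul (a b : Polynomial ℂ) : Polynomial ℂ := b * pint (pint a)

/-- `a ⋄ b = b · I(I(a)) + I(a) · I(b)`. -/
noncomputable def diaMul (a b : Polynomial ℂ) : Polynomial ℂ :=
  b * pint (pint a) + pint a * pint b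

open Polynomial

lemma pint_derivative (p : Polynomial ℂ) : derivative (pint p) = p := by
  rw [pint, Polynomial.sum_def, map_sum]
  conv_rhs => rw [← Polynomial.sum_C_mul_X_pow_eq p, Polynomial.sum_def]
  refine Finset.sum_congr rfl fun n _ => ?_
  rw [derivative_C_mul, derivative_X_pow]
  have h : ((n : ℂ) + 1) ≠ 0 := Nat.cast_add_one_ne_zero n
  push_cast
  rw [← mul_assoc, ← Polynomial.C_mul, div_mul_cancel₀ _ h]

lemma pint_coeff_zero (p : Polynomial ℂ) : (pint p).coeff 0 = 0 := by
  rw [pint, Polynomial.sum_def, Polynomial.finset_sum_coeff]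
  refine Finset.sum_eq_zero fun n _ => ?_
  simp [Polynomial.coeff_C_mul, Polynomial.coeff_X_pow]

lemma pint_eq {p q : Polynomial ℂ} (hd : derivative p = q) (h0 : p.coeff 0 = 0) :
    pint q = p := by
  have h : derivative (pint q - p) = 0 := by
    rw [map_sub, pint_derivative, hd, sub_self]
  have := Polynomial.eq_C_of_derivative_eq_zero h
  rw [Polynomial.coeff_sub, pint_coeff_zero, h0, sub_zero, map_zero] at this
  exact sub_eq_zero.mp this

lemma pint_add (p q : Polynomial ℂ) : pint (p + q) = pint p + pint q :=
  pint_eq (by rw [map_add, pint_derivative, pint_derivative])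
    (by rw [Polynomial.coeff_add, pint_coeff_zero, pint_coeff_zero, add_zero])

lemma pint_smul (c : ℂ) (p : Polynomial ℂ) : pint (c • p) = c • pint p :=
  pint_eq (by rw [derivative_smul, pint_derivative])
    (by rw [Polynomial.coeff_smul, pint_coeff_zero, smul_zero])

lemma pint_zero : pint 0 = 0 :=
  pint_eq (by simp) (by simp)

lemma pint_dia (a b : Polynomial ℂ) :
    pint (b * pint (pint a) + pint a * pint b) = pint b * pint (pint a) :=
  pint_eq (by rw [derivative_mul, pint_derivative, pint_derivative]; ring)
    (by rw [Polynomial.mul_coeff_zero, pint_coeff_zero, zero_mul])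

lemma pint_dia2 (a b : Polynomial ℂ) :
    pint (pint b * pint (pint a) + pint a * pint (pint b)) =
      pint (pint a) * pint (pint b) :=
  pint_eq (by rw [derivative_mul, pint_derivative, pint_derivative]; ring)
    (by rw [Polynomial.mul_coeff_zero, pint_coeff_zero, zero_mul])

lemma dia_zinbiel (a b c : Polynomial ℂ) :
    diaMul a (diaMul b c) = diaMul (diaMul a b + diaMul b a) c := by
  simp only [diaMul]
  rw [pint_dia b c,
    pint_add (b * pint (pint a) + pint a * pint b) (a * pint (pint b) + pint b * pint a),
    pint_dia a b, pint_dia b a, pint_dia2 a b]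
  ring

lemma star_dia_comm (a b : Polynomial ℂ) :
    starMul a b - starMul b a = diaMul a b - diaMul b a := by
  simp only [starMul, diaMul]; ring

/-- Type synonym for `Polynomial ℂ` carrying the `⋄` product. -/
def Zin : Type := Polynomial ℂ

lemma dia_left_distrib (a b c : Polynomial ℂ) :
    diaMul a (b + c) = diaMul a b + diaMul a c := by
  simp only [diaMul, pint_add]; ring

lemma dia_right_distrib (a b c : Polynomial ℂ) :
    diaMul (a + b) c = diaMul a c + diaMul b c := by
  simp only [diaMul, pint_add]; ring

lemma dia_zero_mul (a : Polynomial ℂ) : diaMul 0 a = 0 := by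
  simp [diaMul, pint_zero]

lemma dia_mul_zero (a : Polynomial ℂ) : diaMul a 0 = 0 := by
  simp [diaMul, pint_zero]

lemma dia_smul_comm (c : ℂ) (a b : Polynomial ℂ) :
    c • diaMul a b = diaMul a (c • b) := by
  simp only [diaMul, pint_smul, smul_add, smul_mul_assoc, mul_smul_comm]

lemma dia_smul_assoc (c : ℂ) (a b : Polynomial ℂ) :
    diaMul (c • a) b = c • diaMul a b := by
  simp only [diaMul, pint_smul, smul_add, smul_mul_assoc, mul_smul_comm]

noncomputable instance : NonUnitalNonAssocRing Zin :=
  { (inferInstance : AddCommGroup (Polynomial ℂ)) with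
    mul := diaMul
    left_distrib := dia_left_distrib
    right_distrib := dia_right_distrib
    zero_mul := dia_zero_mul
    mul_zero := dia_mul_zero }

noncomputable instance : Module ℂ Zin := (inferInstance : Module ℂ (Polynomial ℂ))

instance : SMulCommClass ℂ Zin Zin := ⟨fun c a b => dia_smul_comm c a b⟩

instance : IsScalarTower ℂ Zin Zin := ⟨dia_smul_assoc⟩

/-- The Zinbiel algebra `(ℂ[x], ⋄)`. -/
noncomputable def ZinA : ZinbielAlgebra ℂ where
  carrier := Zin
  zinbiel := dia_zinbiel

/-- The identity as a linear map `ℂ[x] → Zin`. -/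
noncomputable def φ0 : Polynomial ℂ →ₗ[ℂ] Zin where
  toFun p := p
  map_add' _ _ := rfl
  map_smul' _ _ := rfl

/-- `(ℂ[x], ⋄)` is a Zinbiel algebra, `⋆` and `⋄` have the same commutator, and hence
the Tortkara algebra `(ℂ[x], [·,·]_⋆)` is special: it embeds into the minus-algebra of
a Zinbiel algebra. -/
theorem integration_example_special :
    (∀ a b c : Polynomial ℂ, diaMul a (diaMul b c) = diaMul (diaMul a b + diaMul b a) c) ∧
    (∀ a b : Polynomial ℂ, starMul a b - starMul b a = diaMul a b - diaMul b a) ∧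
    ∃ (A : ZinbielAlgebra ℂ) (φ : Polynomial ℂ →ₗ[ℂ] A.carrier),
      Function.Injective φ ∧
      ∀ a b : Polynomial ℂ, φ (starMul a b - starMul b a) = φ a * φ b - φ b * φ a := by
  exact ⟨dia_zinbiel, star_dia_comm, ZinA, φ0, fun a b h => h,
    fun a b => star_dia_comm a b⟩
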